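/- arXiv:1906.09590 — 2 statements merged into one kernel-verified Lean document; each statement's English description precedes it below -/
import Mathlib

section
/- Let f_1,…,f_n be probability generating functions of probability measures on ℕ with finite means m_1,…,m_n. Then 1 − f_1(f_2(⋯f_n(0)⋯)) ≤ min_{0≤k≤n} ∏_{i=1}^k m_i (with the empty product equal to 1). Equivalently, for a branching process Z in the environment (f_1,…,f_n) started from one particle, P(Z_n>0 | environment) ≤ exp(min_{0≤k≤n} S_k), where S_k=∑_{i=1}^k log m_i. -/
open Finset MeasureTheory

noncomputable section

/-- Probability generating function of a mass function on `ℕ`: `f(s) = ∑_j μ({j}) s^j`. -/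
def genFun (f : ℕ → ℝ) (s : ℝ) : ℝ := ∑' j : ℕ, f j * s ^ j

/-- Mean of a mass function on `ℕ`: `m = ∑_j j·μ({j})`. -/
def meanOf (f : ℕ → ℝ) : ℝ := ∑' j : ℕ, (j : ℝ) * f j

/-- `f` is the mass function of a probability measure on `ℕ`. -/
def IsMassFun (f : ℕ → ℝ) : Prop := (∀ j, 0 ≤ f j) ∧ HasSum f 1

/-- `iterComp F k i s = F_{i+1}(F_{i+2}(⋯ F_{i+k}(s) ⋯))`. -/
def iterComp (F : ℕ → ℝ → ℝ) : ℕ → ℕ → ℝ → ℝ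
  | 0, _, s => s
  | k + 1, i, s => F (i + 1) (iterComp F k (i + 1) s)

/-- `Fcomp F i n s = F_{i,n}(s) = F_{i+1}(F_{i+2}(⋯ F_n(s) ⋯))`. -/
def Fcomp (F : ℕ → ℝ → ℝ) (i n : ℕ) (s : ℝ) : ℝ := iterComp F (n - i) i s

/-!
Bernoulli's inequality `1 - s^j ≤ j (1 - s)` on `[0, 1]`, summed against a mass function, gives
`1 - f(s) ≤ m (1 - s)` for a generating function `f` with mean `m`. Composing these linear bounds
along `f_1 ∘ ⋯ ∘ f_k` gives `1 - f_1(⋯ f_k(t)) ≤ m_1 ⋯ m_k (1 - t)`, and we take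
`t = f_{k+1}(⋯ f_n(0)) ∈ [0, 1]`. Finally `x ≤ exp (log x)` for `x ≥ 0`.
-/

section GenFun

variable {f : ℕ → ℝ} {s : ℝ}

lemma meanOf_nonneg (hf : IsMassFun f) : 0 ≤ meanOf f :=
  tsum_nonneg fun j => mul_nonneg j.cast_nonneg (hf.1 j)

lemma IsMassFun.mul_pow_le (hf : IsMassFun f) (hs : s ∈ Set.Icc (0 : ℝ) 1) (j : ℕ) :
    f j * s ^ j ≤ f j :=
  mul_le_of_le_one_right (hf.1 j) (pow_le_one₀ hs.1 hs.2)

lemma IsMassFun.summable_mul_pow (hf : IsMassFun f) (hs : s ∈ Set.Icc (0 : ℝ) 1) :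
    Summable fun j : ℕ => f j * s ^ j :=
  hf.2.summable.of_nonneg_of_le (fun j => mul_nonneg (hf.1 j) (pow_nonneg hs.1 j))
    (hf.mul_pow_le hs)

lemma genFun_mapsTo (hf : IsMassFun f) : Set.MapsTo (genFun f) (Set.Icc 0 1) (Set.Icc 0 1) :=
  fun _ hs =>
    ⟨tsum_nonneg fun j => mul_nonneg (hf.1 j) (pow_nonneg hs.1 j),
      hf.2.tsum_eq ▸ (hf.summable_mul_pow hs).tsum_le_tsum (hf.mul_pow_le hs) hf.2.summable⟩

lemma one_sub_genFun_le (hf : IsMassFun f) (hm : Summable fun j : ℕ => (j : ℝ) * f j)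
    (hs : s ∈ Set.Icc (0 : ℝ) 1) : 1 - genFun f s ≤ meanOf f * (1 - s) := by
  have bernoulli (j : ℕ) : f j - f j * s ^ j ≤ (j : ℝ) * f j * (1 - s) := by
    have := one_add_mul_sub_le_pow (show (-1 : ℝ) ≤ s by linarith [hs.1]) j
    nlinarith [hf.1 j]
  calc 1 - genFun f s = ∑' j : ℕ, (f j - f j * s ^ j) := by
        rw [hf.2.summable.tsum_sub (hf.summable_mul_pow hs), hf.2.tsum_eq, genFun]
    _ ≤ ∑' j : ℕ, (j : ℝ) * f j * (1 - s) :=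
        (hf.2.summable.sub (hf.summable_mul_pow hs)).tsum_le_tsum bernoulli (hm.mul_right _)
    _ = meanOf f * (1 - s) := tsum_mul_right

end GenFun

section IterComp

variable {F : ℕ → ℝ → ℝ} {i k : ℕ}

lemma iterComp_add (F : ℕ → ℝ → ℝ) (a b i : ℕ) (s : ℝ) :
    iterComp F (a + b) i s = iterComp F a i (iterComp F b (i + a) s) := by
  induction a generalizing i with
  | zero => simp [iterComp]
  | succ a ih =>
    rw [Nat.add_right_comm, iterComp, ih, iterComp, Nat.add_right_comm, Nat.add_assoc]

lemma iterComp_succ_right (F : ℕ → ℝ → ℝ) (k i : ℕ) (s : ℝ) :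
    iterComp F (k + 1) i s = iterComp F k i (F (i + k + 1) s) :=
  iterComp_add F k 1 i s

lemma iterComp_mapsTo {S : Set ℝ} (hF : ∀ j ∈ Ioc i (i + k), Set.MapsTo (F j) S S) :
    Set.MapsTo (iterComp F k i) S S := by
  induction k with
  | zero => exact Set.mapsTo_id S
  | succ k ih =>
    rw [funext (iterComp_succ_right F k i)]
    exact (ih fun j hj => hF j (Ioc_subset_Ioc_right (by omega) hj)).comp
      (hF (i + k + 1) (by simp))

lemma one_sub_iterComp_le {c : ℕ → ℝ}
    (hF : ∀ j ∈ Ioc i (i + k), Set.MapsTo (F j) (Set.Icc 0 1) (Set.Icc 0 1))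
    (hc : ∀ j ∈ Ioc i (i + k), 0 ≤ c j)
    (hbound : ∀ j ∈ Ioc i (i + k), ∀ t ∈ Set.Icc (0 : ℝ) 1, 1 - F j t ≤ c j * (1 - t))
    {s : ℝ} (hs : s ∈ Set.Icc (0 : ℝ) 1) :
    1 - iterComp F k i s ≤ (∏ j ∈ Ioc i (i + k), c j) * (1 - s) := by
  induction k generalizing s with
  | zero => simp [iterComp]
  | succ k ih =>
    have hsub : Ioc i (i + k) ⊆ Ioc i (i + (k + 1)) := Ioc_subset_Ioc_right (by omega)
    have htop : i + k + 1 ∈ Ioc i (i + (k + 1)) := by simp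
    rw [iterComp_succ_right, ← Nat.add_assoc, prod_Ioc_succ_top (by omega), mul_assoc]
    calc 1 - iterComp F k i (F (i + k + 1) s)
        ≤ (∏ j ∈ Ioc i (i + k), c j) * (1 - F (i + k + 1) s) :=
          ih (fun j hj => hF j (hsub hj)) (fun j hj => hc j (hsub hj))
            (fun j hj => hbound j (hsub hj)) (hF _ htop hs)
      _ ≤ (∏ j ∈ Ioc i (i + k), c j) * (c (i + k + 1) * (1 - s)) :=
          mul_le_mul_of_nonneg_left (hbound _ htop s hs)
            (prod_nonneg fun j hj => hc j (hsub hj))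

end IterComp

lemma prod_le_exp_sum_log {ι : Type*} (s : Finset ι) {x : ι → ℝ} (hx : ∀ i ∈ s, 0 ≤ x i) :
    ∏ i ∈ s, x i ≤ Real.exp (∑ i ∈ s, Real.log (x i)) := by
  rw [Real.exp_sum]
  exact prod_le_prod hx fun i _ => Real.le_exp_log (x i)

/-- for probability generating functions `f_1,…,f_n` of probability measures on `ℕ`
with finite means `m_1,…,m_n`, the survival probability of the associated branching process in
varying environment satisfies
`1 − f_1(f_2(⋯f_n(0)⋯)) ≤ min_{0 ≤ k ≤ n} ∏_{i=1}^k m_i`, i.e. the bound holds for every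
`0 ≤ k ≤ n`; equivalently `P(Z_n > 0 | env) ≤ exp (min_{0 ≤ k ≤ n} S_k)` with
`S_k = ∑_{i=1}^k log m_i`. -/
theorem survival_le_exp_min_assoc_walk (n : ℕ) (μ : ℕ → ℕ → ℝ)
    (hmass : ∀ i, 1 ≤ i → i ≤ n → IsMassFun (μ i))
    (hmean : ∀ i, 1 ≤ i → i ≤ n → Summable fun j : ℕ => (j : ℝ) * μ i j) :
    (∀ k, k ≤ n →
      1 - Fcomp (fun i => genFun (μ i)) 0 n 0 ≤ ∏ i ∈ Finset.Icc 1 k, meanOf (μ i)) ∧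
    (∀ k, k ≤ n →
      1 - Fcomp (fun i => genFun (μ i)) 0 n 0
        ≤ Real.exp (∑ i ∈ Finset.Icc 1 k, Real.log (meanOf (μ i)))) := by
  have henv (a b : ℕ) (hb : a + b ≤ n) (j : ℕ) (hj : j ∈ Ioc a (a + b)) :
      IsMassFun (μ j) ∧ Summable fun l : ℕ => (l : ℝ) * μ j l := by
    rw [mem_Ioc] at hj
    exact ⟨hmass j (by omega) (by omega), hmean j (by omega) (by omega)⟩
  have hmeans_nonneg (k : ℕ) (hk : k ≤ n) : ∀ j ∈ Icc 1 k, 0 ≤ meanOf (μ j) := fun j hj =>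
    meanOf_nonneg (henv 0 k (by omega) j (by rwa [Nat.zero_add, ← Icc_add_one_left_eq_Ioc])).1
  have survival_le_prod (k : ℕ) (hk : k ≤ n) :
      1 - Fcomp (fun i => genFun (μ i)) 0 n 0 ≤ ∏ i ∈ Icc 1 k, meanOf (μ i) := by
    have hf := henv 0 k (by omega)
    have ht := iterComp_mapsTo (fun j hj => genFun_mapsTo (henv k (n - k) (by omega) j hj).1)
      (Set.left_mem_Icc.2 zero_le_one)
    have hcomp := one_sub_iterComp_le (c := fun j => meanOf (μ j))
      (fun j hj => genFun_mapsTo (hf j hj).1) (fun j hj => meanOf_nonneg (hf j hj).1)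
      (fun j hj _ ht => one_sub_genFun_le (hf j hj).1 (hf j hj).2 ht) ht
    rw [Nat.zero_add, ← Icc_add_one_left_eq_Ioc, Nat.zero_add] at hcomp
    rw [Fcomp, Nat.sub_zero, show n = k + (n - k) by omega, iterComp_add, Nat.zero_add]
    exact hcomp.trans
      (mul_le_of_le_one_right (prod_nonneg (hmeans_nonneg k hk)) (sub_le_self 1 ht.1))
  exact ⟨survival_le_prod, fun k hk =>
    (survival_le_prod k hk).trans (prod_le_exp_sum_log _ (hmeans_nonneg k hk))⟩
end
end

section
/- Let X_1,X_2,… be i.i.d. real random variables, S_0=0, S_k=X_1+⋯+X_k, M_k:=max(S_1,…,S_k), L_k:=min(S_0,…,S_k), and τ(n):=min{i≥0:S_i=L_n}. Then for every β∈ℝ and all 0≤k≤n, E[e^{−βS_n}·e^{S_k}; τ(n)=k] = E[e^{(1−β)S_k}; M_k<0] · E[e^{−βS_{n−k}}; L_{n−k}≥0] (an identity in [0,∞], where E[A;B] denotes E[A·1_B]). -/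
/-! On `{τ(n) = k}` the walk splits at time `k`: the event says that the reversed pre-minimum
walk `S_k - S_{k-j}` is strictly negative for `1 ≤ j ≤ k` and that the post-minimum walk
`S_{k+j} - S_k` is nonnegative for `j ≤ n - k`, and the weight factors as
`e^{(1-β) S_k} · e^{-β (S_n - S_k)}`. Both factors are thus functions of the disjoint blocks
`(X_k, …, X_1)` and `(X_{k+1}, …, X_n)` of increments, hence independent, and since the
increments are i.i.d. each block has the law of `(X_1, X_2, …)` of the same length. -/

open Finset MeasureTheory ProbabilityTheory
open scoped ENNReal

namespace ProbabilityTheory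

variable {Ω ι β κ κ' : Type*} [MeasurableSpace Ω] [MeasurableSpace β] {P : Measure Ω}
  {X : ι → Ω → β}

lemma iIndepFun.identDistrib_precomp [IsProbabilityMeasure P] [Fintype κ]
    (hX : ∀ i, Measurable (X i)) (hindep : iIndepFun X P)
    (hident : ∀ i j, IdentDistrib (X i) (X j) P P) {e e' : κ → ι}
    (he : e.Injective) (he' : e'.Injective) :
    IdentDistrib (fun ω j => X (e j) ω) (fun ω j => X (e' j) ω) P P where
  aemeasurable_fst := by fun_prop
  aemeasurable_snd := by fun_prop
  map_eq := by
    rw [(iIndepFun_iff_map_fun_eq_pi_map fun j => (hX (e j)).aemeasurable).1 (hindep.precomp he),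
      (iIndepFun_iff_map_fun_eq_pi_map fun j => (hX (e' j)).aemeasurable).1 (hindep.precomp he')]
    congr! 2 with j
    exact (hident _ _).map_eq

lemma iIndepFun.indepFun_precomp_of_disjoint [Fintype κ] [Fintype κ']
    (hX : ∀ i, Measurable (X i)) (hindep : iIndepFun X P) {e : κ → ι} {e' : κ' → ι}
    (hee' : Disjoint (Set.range e) (Set.range e')) :
    IndepFun (fun ω j => X (e j) ω) (fun ω j => X (e' j) ω) P := by
  classical
  have hdisj : Disjoint (univ.image e) (univ.image e') := by
    rw [← Finset.disjoint_coe]; simpa using hee'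
  exact (hindep.indepFun_finset _ _ hdisj hX).comp
    (φ := fun u j => u ⟨e j, mem_image_of_mem e (mem_univ j)⟩)
    (ψ := fun u j => u ⟨e' j, mem_image_of_mem e' (mem_univ j)⟩) (by fun_prop) (by fun_prop)

end ProbabilityTheory

namespace RandomWalk

noncomputable def firstMinTime {α : Type*} [LinearOrder α] (s : ℕ → α) (n : ℕ) : ℕ :=
  sInf {i | ∀ j ≤ n, s i ≤ s j}

lemma firstMinTime_eq_iff {α : Type*} [LinearOrder α] {s : ℕ → α} {k n : ℕ} (hkn : k ≤ n) :
    firstMinTime s n = k ↔ (∀ i < k, s k < s i) ∧ ∀ j, k ≤ j → j ≤ n → s k ≤ s j := by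
  set T := {i | ∀ j ≤ n, s i ≤ s j}
  constructor
  · rintro rfl
    obtain ⟨i₀, -, hi₀⟩ := exists_min_image (range (n + 1)) s nonempty_range_add_one
    have hmin : sInf T ∈ T := Nat.sInf_mem ⟨i₀, fun j hj => hi₀ j (by simpa [Nat.lt_succ_iff])⟩
    refine ⟨fun i hi => ?_, fun j _ hjn => hmin j hjn⟩
    obtain ⟨j, hjn, hji⟩ : ∃ j ≤ n, s j < s i := by
      simpa [T] using Nat.notMem_of_lt_sInf hi
    exact (hmin j hjn).trans_lt hji
  · rintro ⟨hbefore, hafter⟩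
    have hk : k ∈ T := fun j hjn =>
      (lt_or_ge j k).elim (fun hjk => (hbefore j hjk).le) fun hkj => hafter j hkj hjn
    exact le_antisymm (Nat.sInf_le hk)
      (le_csInf ⟨k, hk⟩ fun i hi => not_lt.1 fun hik => (hbefore i hik).not_ge (hi k hkn))

lemma sum_range_reflect_eq_sub {M : Type*} [AddCommGroup M] (x : ℕ → M) {j k : ℕ}
    (hj : j ≤ k) :
    ∑ i ∈ range j, x (k - i) = ∑ i ∈ range k, x (i + 1) - ∑ i ∈ range (k - j), x (i + 1) := by
  have hsplit := sum_range_add (fun i => x (i + 1)) (k - j) j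
  rw [Nat.sub_add_cancel hj] at hsplit
  rw [hsplit, add_sub_cancel_left, ← sum_range_reflect]
  exact sum_congr rfl fun i hi => by congr 1; have := mem_range.1 hi; omega

def partialSum {m : ℕ} (x : Fin m → ℝ) (j : ℕ) : ℝ := ∑ i : Fin m with i.val < j, x i

lemma partialSum_comp_val {m j : ℕ} (z : ℕ → ℝ) (hj : j ≤ m) :
    partialSum (fun i : Fin m => z i) j = ∑ i ∈ range j, z i := by
  rw [partialSum, sum_filter, Fin.sum_univ_eq_sum_range (fun i => if i < j then z i else 0),
    ← sum_filter]
  congr 1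
  ext i
  simp only [mem_filter, mem_range]
  omega

@[fun_prop]
lemma measurable_partialSum {m : ℕ} (j : ℕ) :
    Measurable fun x : Fin m → ℝ => partialSum x j := by
  unfold partialSum; fun_prop

def negWalks (m : ℕ) : Set (Fin m → ℝ) := {x | ∀ j, 1 ≤ j → j ≤ m → partialSum x j < 0}

def nonnegWalks (m : ℕ) : Set (Fin m → ℝ) := {x | ∀ j ≤ m, 0 ≤ partialSum x j}

lemma measurableSet_negWalks (m : ℕ) : MeasurableSet (negWalks m) := by
  unfold negWalks; measurability

lemma measurableSet_nonnegWalks (m : ℕ) : MeasurableSet (nonnegWalks m) := by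
  unfold nonnegWalks; measurability

section Increments

variable {Ω : Type*} (X : ℕ → Ω → ℝ)

def reversedIncrements (k : ℕ) (ω : Ω) : Fin k → ℝ := fun i => X (k - i) ω

def shiftedIncrements (k m : ℕ) (ω : Ω) : Fin m → ℝ := fun i => X (k + i + 1) ω

variable {X} {S : ℕ → Ω → ℝ}

lemma partialSum_reversedIncrements (hS : ∀ n ω, S n ω = ∑ i ∈ range n, X (i + 1) ω)
    {j k : ℕ} (hj : j ≤ k) (ω : Ω) :
    partialSum (reversedIncrements X k ω) j = S k ω - S (k - j) ω := by
  unfold reversedIncrements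
  rw [partialSum_comp_val (fun i => X (k - i) ω) hj, hS, hS,
    sum_range_reflect_eq_sub (X · ω) hj]

lemma partialSum_shiftedIncrements (hS : ∀ n ω, S n ω = ∑ i ∈ range n, X (i + 1) ω)
    (k : ℕ) {j m : ℕ} (hj : j ≤ m) (ω : Ω) :
    partialSum (shiftedIncrements X k m ω) j = S (k + j) ω - S k ω := by
  unfold shiftedIncrements
  rw [partialSum_comp_val (fun i => X (k + i + 1) ω) hj, hS, hS,
    sum_range_add, add_sub_cancel_left]

lemma partialSum_shiftedIncrements_zero (hS : ∀ n ω, S n ω = ∑ i ∈ range n, X (i + 1) ω)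
    {j m : ℕ} (hj : j ≤ m) (ω : Ω) :
    partialSum (shiftedIncrements X 0 m ω) j = S j ω := by
  simp [partialSum_shiftedIncrements hS 0 hj, hS 0]

lemma setOf_firstMinTime_eq (hS : ∀ n ω, S n ω = ∑ i ∈ range n, X (i + 1) ω)
    {k n : ℕ} (hkn : k ≤ n) :
    {ω | firstMinTime (S · ω) n = k} =
      reversedIncrements X k ⁻¹' negWalks k ∩
        shiftedIncrements X k (n - k) ⁻¹' nonnegWalks (n - k) := by
  ext ω
  simp only [Set.mem_ofPred_eq, Set.mem_inter_iff, Set.mem_preimage, negWalks, nonnegWalks,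
    firstMinTime_eq_iff hkn]
  refine and_congr ⟨fun h j hj₁ hjk => ?_, fun h i hik => ?_⟩
    ⟨fun h j hj => ?_, fun h j hkj hjn => ?_⟩
  · rw [partialSum_reversedIncrements hS hjk]
    linarith [h (k - j) (by omega)]
  · have := h (k - i) (by omega) (Nat.sub_le k i)
    rw [partialSum_reversedIncrements hS (Nat.sub_le k i), Nat.sub_sub_self hik.le] at this
    linarith
  · rw [partialSum_shiftedIncrements hS k hj]
    linarith [h (k + j) (by omega) (by omega)]
  · have := h (j - k) (by omega)
    rw [partialSum_shiftedIncrements hS k (by omega), Nat.add_sub_cancel' hkj] at this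
    linarith

lemma setOf_forall_neg_eq_preimage (hS : ∀ n ω, S n ω = ∑ i ∈ range n, X (i + 1) ω)
    (k : ℕ) : {ω | ∀ i, 1 ≤ i → i ≤ k → S i ω < 0} = shiftedIncrements X 0 k ⁻¹' negWalks k := by
  ext ω
  simp +contextual [negWalks, partialSum_shiftedIncrements_zero hS]

lemma setOf_forall_nonneg_eq_preimage (hS : ∀ n ω, S n ω = ∑ i ∈ range n, X (i + 1) ω)
    (m : ℕ) : {ω | ∀ i ≤ m, 0 ≤ S i ω} = shiftedIncrements X 0 m ⁻¹' nonnegWalks m := by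
  ext ω
  simp +contextual [nonnegWalks, partialSum_shiftedIncrements_zero hS]

end Increments

section Probability

variable {Ω : Type*} [MeasurableSpace Ω] {P : Measure Ω} {X : ℕ → Ω → ℝ}

lemma measurable_reversedIncrements (hX : ∀ n, Measurable (X n)) (k : ℕ) :
    Measurable (reversedIncrements X k) := by
  unfold reversedIncrements; fun_prop

lemma measurable_shiftedIncrements (hX : ∀ n, Measurable (X n)) (k m : ℕ) :
    Measurable (shiftedIncrements X k m) := by
  unfold shiftedIncrements; fun_prop

lemma indepFun_reversedIncrements_shiftedIncrements (hX : ∀ n, Measurable (X n))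
    (hindep : iIndepFun X P) (k m : ℕ) :
    IndepFun (reversedIncrements X k) (shiftedIncrements X k m) P := by
  refine hindep.indepFun_precomp_of_disjoint hX (Set.disjoint_left.2 ?_)
  rintro _ ⟨i, rfl⟩ ⟨i', h⟩
  simp only at h
  omega

variable [IsProbabilityMeasure P]

lemma identDistrib_reversedIncrements (hX : ∀ n, Measurable (X n)) (hindep : iIndepFun X P)
    (hident : ∀ i j, IdentDistrib (X i) (X j) P P) (k : ℕ) :
    IdentDistrib (reversedIncrements X k) (shiftedIncrements X 0 k) P P :=
  hindep.identDistrib_precomp hX hident (fun i i' h => Fin.ext (by omega))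
    (fun i i' h => Fin.ext (by omega))

lemma identDistrib_shiftedIncrements (hX : ∀ n, Measurable (X n)) (hindep : iIndepFun X P)
    (hident : ∀ i j, IdentDistrib (X i) (X j) P P) (k m : ℕ) :
    IdentDistrib (shiftedIncrements X k m) (shiftedIncrements X 0 m) P P :=
  hindep.identDistrib_precomp hX hident (fun i i' h => Fin.ext (by omega))
    (fun i i' h => Fin.ext (by omega))

theorem setLIntegral_firstMinTime_eq_mul (hX : ∀ n, Measurable (X n)) (hindep : iIndepFun X P)
    (hident : ∀ i j, IdentDistrib (X i) (X j) P P)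
    {S : ℕ → Ω → ℝ} (hS : ∀ n ω, S n ω = ∑ i ∈ range n, X (i + 1) ω)
    {f g : ℝ → ℝ≥0∞} (hf : Measurable f) (hg : Measurable g) {k n : ℕ} (hkn : k ≤ n) :
    ∫⁻ ω in {ω | firstMinTime (S · ω) n = k}, f (S k ω) * g (S n ω - S k ω) ∂P =
      (∫⁻ ω in {ω | ∀ i, 1 ≤ i → i ≤ k → S i ω < 0}, f (S k ω) ∂P) *
        ∫⁻ ω in {ω | ∀ i ≤ n - k, 0 ≤ S i ω}, g (S (n - k) ω) ∂P := by
  set F := (negWalks k).indicator fun x => f (partialSum x k)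
  set G := (nonnegWalks (n - k)).indicator fun x => g (partialSum x (n - k))
  have hF : Measurable F :=
    (hf.comp (measurable_partialSum k)).indicator (measurableSet_negWalks k)
  have hG : Measurable G :=
    (hg.comp (measurable_partialSum _)).indicator (measurableSet_nonnegWalks _)
  have hrev := measurable_reversedIncrements hX k
  have hpost := measurable_shiftedIncrements hX k (n - k)
  calc _ = ∫⁻ ω, F (reversedIncrements X k ω) * G (shiftedIncrements X k (n - k) ω) ∂P := by
        rw [setOf_firstMinTime_eq hS hkn, ← lintegral_indicator
          ((hrev (measurableSet_negWalks k)).inter (hpost (measurableSet_nonnegWalks _)))]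
        refine lintegral_congr fun ω => ?_
        simp only [Set.inter_indicator_mul, F, G, ← Set.indicator_comp_right, Function.comp_def,
          partialSum_reversedIncrements hS le_rfl, partialSum_shiftedIncrements hS k le_rfl,
          Nat.sub_self, Nat.add_sub_cancel' hkn, hS 0, sum_range_zero, sub_zero]
    _ = (∫⁻ ω, F (reversedIncrements X k ω) ∂P) *
          ∫⁻ ω, G (shiftedIncrements X k (n - k) ω) ∂P :=
        lintegral_mul_eq_lintegral_mul_lintegral_of_indepFun (hF.comp hrev) (hG.comp hpost)
          ((indepFun_reversedIncrements_shiftedIncrements hX hindep k (n - k)).comp hF hG)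
    _ = (∫⁻ ω, F (shiftedIncrements X 0 k ω) ∂P) *
          ∫⁻ ω, G (shiftedIncrements X 0 (n - k) ω) ∂P := by
        congr 1
        exacts [((identDistrib_reversedIncrements hX hindep hident k).comp hF).lintegral_eq,
          ((identDistrib_shiftedIncrements hX hindep hident k (n - k)).comp hG).lintegral_eq]
    _ = _ := by
        rw [setOf_forall_neg_eq_preimage hS, setOf_forall_nonneg_eq_preimage hS,
          ← lintegral_indicator (measurable_shiftedIncrements hX 0 k (measurableSet_negWalks k)),
          ← lintegral_indicator
            (measurable_shiftedIncrements hX 0 _ (measurableSet_nonnegWalks _))]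
        simp only [F, G, ← Set.indicator_comp_right, Function.comp_def,
          partialSum_shiftedIncrements_zero hS le_rfl]

end Probability

end RandomWalk

/-- duality decomposition of a random walk at the first minimum.
`X_1, X_2, …` i.i.d., `S_0 = 0`, `S_k = X_1 + ⋯ + X_k`, `M_k = max(S_1,…,S_k)`
(the event `M_k < 0` is `∀ i ∈ [1,k], S_i < 0`), `L_k = min(S_0,…,S_k)` (the event
`L_k ≥ 0` is `∀ i ≤ k, S_i ≥ 0`), and `τ(n) = min{i ≥ 0 : S_i = L_n}`.  Then for every
`β ∈ ℝ` and `0 ≤ k ≤ n`,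
`E[e^{−βS_n}·e^{S_k}; τ(n) = k] = E[e^{(1−β)S_k}; M_k < 0] · E[e^{−βS_{n−k}}; L_{n−k} ≥ 0]`,
an identity in `[0,∞]`. -/
theorem rw_duality_first_minimum {Ω : Type*} [MeasurableSpace Ω]
    (P : Measure Ω) [IsProbabilityMeasure P]
    (X : ℕ → Ω → ℝ) (hmeas : ∀ n, Measurable (X n))
    (hindep : iIndepFun X P)
    (hident : ∀ n, IdentDistrib (X n) (X 1) P P)
    (S : ℕ → Ω → ℝ) (hS : ∀ n ω, S n ω = ∑ i ∈ Finset.range n, X (i + 1) ω)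
    (τ : ℕ → Ω → ℕ) (hτ : ∀ n ω, τ n ω = sInf {i | ∀ j ≤ n, S i ω ≤ S j ω})
    (β : ℝ) (k n : ℕ) (hkn : k ≤ n) :
    ∫⁻ ω in {ω | τ n ω = k},
        ENNReal.ofReal (Real.exp (-β * S n ω) * Real.exp (S k ω)) ∂P
      = (∫⁻ ω in {ω | ∀ i, 1 ≤ i → i ≤ k → S i ω < 0},
            ENNReal.ofReal (Real.exp ((1 - β) * S k ω)) ∂P)
        * ∫⁻ ω in {ω | ∀ i ≤ n - k, 0 ≤ S i ω},
            ENNReal.ofReal (Real.exp (-β * S (n - k) ω)) ∂P := by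
  have hident' : ∀ i j, IdentDistrib (X i) (X j) P P := fun i j =>
    (hident i).trans (hident j).symm
  have hweight : ∀ ω, ENNReal.ofReal (Real.exp (-β * S n ω) * Real.exp (S k ω)) =
      ENNReal.ofReal (Real.exp ((1 - β) * S k ω)) *
        ENNReal.ofReal (Real.exp (-β * (S n ω - S k ω))) := fun ω => by
    rw [← ENNReal.ofReal_mul (Real.exp_nonneg _), ← Real.exp_add, ← Real.exp_add]
    ring_nf
  simp only [hτ, hweight]
  exact RandomWalk.setLIntegral_firstMinTime_eq_mul hmeas hindep hident' hS
    (f := fun s => ENNReal.ofReal (Real.exp ((1 - β) * s)))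
    (g := fun s => ENNReal.ofReal (Real.exp (-β * s))) (by fun_prop) (by fun_prop) hkn
end
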